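/- Let Y/X be an abelian cover of multigraphs with automorphism group G. For every non-trivial character χ of G, the order of vanishing r(χ) of L_{Y/X}(u,χ)^{-1} at u = 1 equals r_X − 1, where r_X = |E_X| − |V_X| + 1. -/

import Mathlib

/-!  Multigraphs in the Serre formalism: a finite vertex set `V`, a finite set
`D` of darts (oriented edges / half-edges) together with a fixed-point-free
involution `inv` (reversing orientation) and a map `head` assigning to each
dart its terminal vertex.  Edges are the orbits of `inv`; loops and multiple
edges are allowed.  -/
structure Multigraph where
  V : Type
  D : Type
  [fintypeV : Fintype V]
  [fintypeD : Fintype D]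
  [decEqV : DecidableEq V]
  [decEqD : DecidableEq D]
  inv : D → D
  head : D → V
  inv_inv : ∀ d, inv (inv d) = d
  inv_ne : ∀ d, inv d ≠ d

namespace Multigraph

attribute [instance] Multigraph.fintypeV Multigraph.fintypeD Multigraph.decEqV Multigraph.decEqD

variable (Z : Multigraph)

/-- the initial vertex of a dart -/
def tail (d : Z.D) : Z.V := Z.head (Z.inv d)

/-- the number of edges `|E|`: each edge consists of exactly two darts -/
def numEdges : ℕ := Fintype.card Z.D / 2

/-- the degree (valency) of a vertex: the number of darts with head `v`;
loops automatically count twice -/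
def degree (v : Z.V) : ℕ := (Finset.univ.filter fun d : Z.D => Z.head d = v).card

/-- the number of darts with tail `v` and head `w`.  For `v ≠ w` this is the
number of edges joining `v` and `w`; for `v = w` it is twice the number of
loops at `v`. -/
def numDarts (v w : Z.V) : ℕ :=
  (Finset.univ.filter fun d : Z.D => Z.tail d = v ∧ Z.head d = w).card

/-- the number of loops at a vertex -/
def numLoops (v : Z.V) : ℕ := Z.numDarts v v / 2

/-- the number of edges between two (distinct) vertices -/
def numEdgesBetween (v w : Z.V) : ℕ := Z.numDarts v w

def Adj (v w : Z.V) : Prop := ∃ d : Z.D, Z.tail d = v ∧ Z.head d = w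

/-- a multigraph is connected if it is nonempty and any two vertices are
joined by a path -/
def Connected : Prop := Nonempty Z.V ∧ ∀ v w : Z.V, Relation.ReflTransGen Z.Adj v w

/-- no vertices of degree one -/
def NoDegreeOne : Prop := ∀ v : Z.V, Z.degree v ≠ 1

/-- adjacency using only darts from `T` -/
def AdjOn (T : Finset Z.D) (v w : Z.V) : Prop := ∃ d ∈ T, Z.tail d = v ∧ Z.head d = w

/-- A spanning tree, described by its (inv-closed) set of darts: it is
connected, spans all vertices, and has `|V| - 1` edges (i.e. `2(|V|-1)`
darts); a connected spanning subgraph with `|V| - 1` edges is exactly a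
spanning tree. -/
def IsSpanningTree (T : Finset Z.D) : Prop :=
  (∀ d ∈ T, Z.inv d ∈ T) ∧ (∀ v w : Z.V, Relation.ReflTransGen (Z.AdjOn T) v w) ∧
    T.card = 2 * (Fintype.card Z.V - 1)

/-- `κ_Z`, the number of spanning trees of `Z` -/
noncomputable def kappa : ℕ := Nat.card {T : Finset Z.D // Z.IsSpanningTree T}

/-- the adjacency matrix: the diagonal entry at `v` is twice the number of
loops at `v`, the off-diagonal entry at `(v, w)` is the number of edges
joining `v` and `w` -/
def adjMatrix : Matrix Z.V Z.V ℤ := Matrix.of fun v w => (Z.numDarts v w : ℤ)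

/-- the diagonal degree matrix -/
def degMatrix : Matrix Z.V Z.V ℤ := Matrix.diagonal fun v => (Z.degree v : ℤ)

/-- `r_Z = |E_Z| - |V_Z| + 1` -/
def r : ℕ := Z.numEdges + 1 - Fintype.card Z.V

/-- the reciprocal `ζ_Z(u)⁻¹` of the Ihara zeta function, defined through the
three-term determinant formula
`ζ_Z(u)⁻¹ = (1 - u²)^(r-1) · det (I - A u + (D - I) u²)`;
it is a polynomial in `u`. -/
noncomputable def zetaInv : Polynomial ℚ :=
  (1 - Polynomial.X ^ 2) ^ (Z.r - 1) *
    Matrix.det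
      ((1 : Matrix Z.V Z.V (Polynomial ℚ)) -
        (Polynomial.X : Polynomial ℚ) • Z.adjMatrix.map (fun a => (a : Polynomial ℚ)) +
        ((Polynomial.X : Polynomial ℚ) ^ 2) • (Z.degMatrix - 1).map (fun a => (a : Polynomial ℚ)))

/-- `ρ_w(w₀)`: the Laplacian entries -/
def rho (w w0 : Z.V) : ℤ :=
  if w = w0 then (Z.degree w0 : ℤ) - 2 * (Z.numLoops w0 : ℤ)
  else -(Z.numEdgesBetween w w0 : ℤ)

/-- the divisor `φ(w₀) = ∑_w ρ_w(w₀) · w` -/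
noncomputable def lapDiv (w0 : Z.V) : Z.V →₀ ℤ :=
  ∑ w : Z.V, Finsupp.single w (Z.rho w w0)

/-- the Laplacian map `φ : Div(Z) → Div(Z)`, on `Div(Z) = Z.V →₀ ℤ`,
sending `w₀` to `∑_w ρ_w(w₀) · w` -/
noncomputable def lap : (Z.V →₀ ℤ) →ₗ[ℤ] Z.V →₀ ℤ :=
  Finsupp.lsum ℤ fun w0 => LinearMap.toSpanSingleton ℤ _ (Z.lapDiv w0)

/-- the degree map `deg : Div(Z) → ℤ` -/
noncomputable def divDeg : (Z.V →₀ ℤ) →ₗ[ℤ] ℤ :=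
  Finsupp.lsum ℤ fun _ => (LinearMap.id : ℤ →ₗ[ℤ] ℤ)

/-- `Div⁰(Z)`, the divisors of degree zero -/
noncomputable def divZero : Submodule ℤ (Z.V →₀ ℤ) := LinearMap.ker Z.divDeg

/-- `Pr(Z)`, the principal divisors: the image of the Laplacian map -/
noncomputable def prin : Submodule ℤ (Z.V →₀ ℤ) := LinearMap.range Z.lap

end Multigraph

/-- A covering map of multigraphs: maps on vertices and darts commuting with
the structure maps which are local isomorphisms (bijections on stars). -/
structure CoveringMap (Y X : Multigraph) where
  vmap : Y.V → X.V
  dmap : Y.D → X.D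
  head_map : ∀ d, X.head (dmap d) = vmap (Y.head d)
  inv_map : ∀ d, X.inv (dmap d) = dmap (Y.inv d)
  vmap_surj : Function.Surjective vmap
  star_bij : ∀ w : Y.V, Set.BijOn dmap {d | Y.head d = w} {d | X.head d = vmap w}

/-- A Galois (regular) cover of multigraphs `Y/X` with automorphism group `G`:
a covering map together with an action of `G` on `Y` by automorphisms of the
cover which is free and transitive on each vertex fiber (so `G` is identified
with the deck transformation group `Aut(Y/X)`). -/
structure GaloisCover (Y X : Multigraph) (G : Type) [Group G] extends CoveringMap Y X where
  actV : G →* Equiv.Perm Y.V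
  actD : G →* Equiv.Perm Y.D
  act_head : ∀ g d, Y.head (actD g d) = actV g (Y.head d)
  act_inv : ∀ g d, Y.inv (actD g d) = actD g (Y.inv d)
  vmap_act : ∀ g w, vmap (actV g w) = vmap w
  dmap_act : ∀ g d, dmap (actD g d) = dmap d
  act_free : ∀ g w, actV g w = w → g = 1
  fiber_trans : ∀ w w' : Y.V, vmap w = vmap w' → ∃ g : G, actV g w = w'

/-- the first non-vanishing Taylor coefficient of a polynomial `p` at `u = 1` -/
noncomputable def leadingCoeffAtOne {K : Type} [Field K] (p : Polynomial K) : K :=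
  (Polynomial.taylor 1 p).coeff (p.rootMultiplicity 1)

/-- the idempotent `e_χ = |G|⁻¹ ∑_σ χ(σ) σ⁻¹` of `ℂ[G]` attached to a
character `χ` of a finite abelian group `G` -/
noncomputable def charIdem {G : Type} [CommGroup G] [Fintype G] (χ : G →* ℂ) :
    MonoidAlgebra ℂ G :=
  (Fintype.card G : ℂ)⁻¹ • ∑ σ : G, χ σ • MonoidAlgebra.single σ⁻¹ (1 : ℂ)

/-- the complex-conjugate character `χ̄` -/
noncomputable def conjChar {G : Type} [CommGroup G] (χ : G →* ℂ) : G →* ℂ :=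
  (starRingEnd ℂ).toMonoidHom.comp χ

/-- `e = 1 - e_{χ₁}` where `χ₁` is the trivial character -/
noncomputable def eAug (G : Type) [CommGroup G] [Fintype G] : MonoidAlgebra ℂ G :=
  1 - charIdem (1 : G →* ℂ)

/-- the augmentation ideal `I_G = ker(s : ℤ[G] → ℤ)`, as an additive
subgroup of `ℤ[G]` -/
noncomputable def augIdeal (G : Type) [CommGroup G] : AddSubgroup (MonoidAlgebra ℤ G) :=
  AddMonoidHom.ker
    (((Finsupp.lsum ℤ fun _ : G => (LinearMap.id : ℤ →ₗ[ℤ] ℤ)).toAddMonoidHom.comp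
      (MonoidAlgebra.coeffAddEquiv : MonoidAlgebra ℤ G ≃+ (G →₀ ℤ)).toAddMonoidHom :
      MonoidAlgebra ℤ G →+ ℤ))

namespace GaloisCover

variable {Y X : Multigraph} {G : Type} [CommGroup G] [Fintype G] (C : GaloisCover Y X G)

/-- the matrix `A(σ)`, relative to a choice `s` of one vertex `s v` of `Y` in
the fiber of each vertex `v` of `X`: its `(v, v')` entry is twice the number
of loops at `s v` when `v = v'` and `σ = 1`, and otherwise the number of
edges connecting `s v` to `σ · s v'`. -/
noncomputable def Asigma (s : X.V → Y.V) (σ : G) : Matrix X.V X.V ℤ :=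
  Matrix.of fun v v' => (Y.numDarts (s v) (C.actV σ (s v')) : ℤ)

/-- `A_χ = ∑_σ χ(σ) A(σ)` -/
noncomputable def Achi (s : X.V → Y.V) (χ : G →* ℂ) : Matrix X.V X.V ℂ :=
  ∑ σ : G, χ σ • (C.Asigma s σ).map fun a => (a : ℂ)

/-- the reciprocal `L_{Y/X}(u,χ)⁻¹` of the Artin-Ihara L-function, defined
through the three-term determinant formula
`L_{Y/X}(u,χ)⁻¹ = (1 - u²)^(r_X - 1) · det (I - A_χ u + (D - I) u²)`. -/
noncomputable def LInv (s : X.V → Y.V) (χ : G →* ℂ) : Polynomial ℂ :=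
  (1 - Polynomial.X ^ 2) ^ (X.r - 1) *
    Matrix.det
      ((1 : Matrix X.V X.V (Polynomial ℂ)) -
        (Polynomial.X : Polynomial ℂ) • (C.Achi s χ).map Polynomial.C +
        ((Polynomial.X : Polynomial ℂ) ^ 2) • (X.degMatrix - 1).map fun a => (a : Polynomial ℂ))

/-- `θ*_{Y/X}(1) = ∑_χ L*_{Y/X}(1,χ) e_{χ̄} ∈ ℂ[G]` (a finite sum over all
the characters of `G`) -/
noncomputable def thetaStar (s : X.V → Y.V) : MonoidAlgebra ℂ G :=
  ∑ᶠ χ : G →* ℂ, leadingCoeffAtOne (C.LInv s χ) • charIdem (conjChar χ)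

/-- `ℓ_{w_i} : Div(Y) → ℤ[G]`, on a vertex `w`: `∑_σ ρ_{w_i}(σ·w) σ⁻¹`
(here `w_i = s v`) -/
noncomputable def ell (s : X.V → Y.V) (v : X.V) (w : Y.V) : MonoidAlgebra ℤ G :=
  ∑ σ : G, Y.rho (s v) (C.actV σ w) • MonoidAlgebra.single (σ⁻¹ : G) (1 : ℤ)

/-- the `ℤ[G]`-linear extension of `ell` to `Div(Y)` -/
noncomputable def ellD (s : X.V → Y.V) (v : X.V) (Dv : Y.V →₀ ℤ) : MonoidAlgebra ℤ G :=
  Finsupp.sum Dv fun w c => c • C.ell s v w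

/-- `det_{ℤ[G]}(φ)`: the determinant of the `ℤ[G]`-linear Laplacian `φ` on the
free `ℤ[G]`-module `Div(Y) = ⊕ᵢ ℤ[G]·wᵢ`, computed in the basis `(wᵢ)ᵢ`,
i.e. the determinant of the matrix `(ℓ_{w_i}(w_j))_{i,j}`. -/
noncomputable def lapDet (s : X.V → Y.V) : MonoidAlgebra ℤ G :=
  Matrix.det (Matrix.of fun v v' => C.ell s v (s v'))

/-- the action of an element of `ℤ[G]` on `Div(Y)` -/
noncomputable def smulDiv (x : MonoidAlgebra ℤ G) (Dv : Y.V →₀ ℤ) : Y.V →₀ ℤ :=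
  Finsupp.sum x.coeff fun σ c => c • Finsupp.mapDomain (C.actV σ) Dv

/-- the action of an element of `ℂ[G]` on `Div(Y) ⊗ ℂ` -/
noncomputable def smulDivC (x : MonoidAlgebra ℂ G) (Dv : Y.V →₀ ℂ) : Y.V →₀ ℂ :=
  Finsupp.sum x.coeff fun σ c => c • Finsupp.mapDomain (C.actV σ) Dv

/-- `res : Div(Y) → Div(X)`, sending a vertex `w` to `π(w)` -/
noncomputable def res (Dv : Y.V →₀ ℤ) : X.V →₀ ℤ := Finsupp.mapDomain C.vmap Dv

/-- `cor : Div(X) → Div(Y)`, sending a vertex `v` to `∑_{w ∈ π⁻¹(v)} w` -/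
noncomputable def cor (Dv : X.V →₀ ℤ) : Y.V →₀ ℤ :=
  Finsupp.equivFunOnFinite.symm fun w => Dv (C.vmap w)

/-- the norm element `N_G = ∑_σ σ` acting on `Div(Y)` -/
noncomputable def normMap : (Y.V →₀ ℤ) →ₗ[ℤ] Y.V →₀ ℤ :=
  ∑ σ : G, Finsupp.lmapDomain ℤ ℤ (C.actV σ)

end GaloisCover

/-- An intermediate cover of a Galois cover `Y/X`, corresponding to a subgroup
`H ≤ G = Aut(Y/X)`: a multigraph `Z` (the quotient `Y/H`) which is at the
same time a Galois cover of which `Y` is a Galois `H`-cover (with the action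
of `H` being the restriction of that of `G`) and a cover of `X`, compatibly
with the covering `Y → X`. -/
structure IntermediateCover {Y X : Multigraph} {G : Type} [Group G]
    (C : GaloisCover Y X G) (H : Subgroup G) where
  Z : Multigraph
  upper : GaloisCover Y Z ↥H
  lower : CoveringMap Z X
  actV_compat : ∀ (h : ↥H) (w : Y.V), upper.actV h w = C.actV (h : G) w
  actD_compat : ∀ (h : ↥H) (d : Y.D), upper.actD h d = C.actD (h : G) d
  vmap_compat : ∀ w : Y.V, lower.vmap (upper.vmap w) = C.vmap w
  dmap_compat : ∀ d : Y.D, lower.dmap (upper.dmap d) = C.dmap d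

/-! At `u = 1` the determinant factor of `L_{Y/X}(u,χ)⁻¹` becomes `det (D - A_χ)`, so it suffices
that this determinant does not vanish for `χ ≠ 1`. A kernel vector `x` of `D - A_χ` lifts to the
function `f (σ · w_v) = χ(σ) x_v` on `Y`, which is harmonic. The Dirichlet energy
`∑_d |f (head d) - f (tail d)|²` of a harmonic function vanishes, so on the connected graph `Y` the
function `f` is constant; since `χ(σ) ≠ 1` for some `σ`, this forces `x = 0`. -/

open Finset

section
open Polynomial

theorem Polynomial.rootMultiplicity_one_sub_X_sq_pow_mul {R : Type*} [CommRing R] [IsDomain R]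
    (h2 : (2 : R) ≠ 0) (k : ℕ) {p : R[X]} (hp : p.eval 1 ≠ 0) :
    ((1 - X ^ 2) ^ k * p).rootMultiplicity 1 = k := by
  have hfactor : ((1 : R[X]) - X ^ 2) ^ k * p = ((-(X + 1)) ^ k * p) * (X - C 1) ^ k := by
    rw [show (1 : R[X]) - X ^ 2 = -(X + 1) * (X - C 1) by rw [C_1]; ring, mul_pow]
    ring
  have hq : ((-(X + 1)) ^ k * p).eval 1 ≠ 0 := by
    rw [eval_mul, eval_pow, eval_neg, eval_add, eval_X, eval_one, one_add_one_eq_two]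
    exact mul_ne_zero (pow_ne_zero _ (neg_ne_zero.mpr h2)) hp
  rw [hfactor, rootMultiplicity_mul_X_sub_C_pow (fun h => hq (by rw [h, eval_zero])),
    rootMultiplicity_eq_zero hq, zero_add]

theorem Matrix.eval_one_det_one_sub_X_smul_add_X_sq_smul {n R : Type*} [Fintype n]
    [DecidableEq n] [CommRing R] (A : Matrix n n R) (D : Matrix n n ℤ) :
    ((1 - (X : R[X]) • A.map C + (X : R[X]) ^ 2 • (D - 1).map fun a => (a : R[X])).det).eval 1
      = (D.map (fun a => (a : R)) - A).det := by
  rw [← coe_evalRingHom, RingHom.map_det]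
  congr 1
  ext i j
  by_cases h : i = j
  · simp [h]
  · simp [h, neg_add_eq_sub]

end

namespace Multigraph

variable (Z : Multigraph)

def IsHarmonic {R : Type*} [CommRing R] (f : Z.V → R) : Prop :=
  ∀ w, ∑ d ∈ univ.filter (fun d => Z.tail d = w), f (Z.head d) = Z.degree w * f w

theorem tail_inv (d : Z.D) : Z.tail (Z.inv d) = Z.head d := by
  rw [tail, Z.inv_inv]

theorem sum_tail_head_comm {M : Type*} [AddCommMonoid M] (F : Z.V → Z.V → M) :
    ∑ d, F (Z.tail d) (Z.head d) = ∑ d, F (Z.head d) (Z.tail d) := by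
  rw [← Equiv.sum_comp (Function.Involutive.toPerm Z.inv fun d => Z.inv_inv d)]
  refine sum_congr rfl fun d _ => ?_
  change F (Z.tail (Z.inv d)) (Z.head (Z.inv d)) = _
  rw [tail_inv]
  rfl

theorem sum_head_eq_sum_degree_mul {R : Type*} [CommRing R] (F : Z.V → R) :
    ∑ d, F (Z.head d) = ∑ w, (Z.degree w : R) * F w := by
  rw [← sum_fiberwise univ Z.head]
  refine sum_congr rfl fun w _ => ?_
  rw [sum_congr rfl fun d hd => by rw [(mem_filter.mp hd).2], sum_const, degree, nsmul_eq_mul]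

theorem sum_star_eq_sum_numDarts {R : Type*} [CommRing R] (F : Z.V → R) (v : Z.V) :
    ∑ d ∈ univ.filter (fun d => Z.tail d = v), F (Z.head d)
      = ∑ w, (Z.numDarts v w : R) * F w := by
  rw [← sum_fiberwise _ Z.head]
  refine sum_congr rfl fun w _ => ?_
  rw [sum_congr rfl fun d hd => by rw [(mem_filter.mp hd).2], sum_const, filter_filter,
    numDarts, nsmul_eq_mul]

variable {Z}

theorem IsHarmonic.sum_head_mul_tail {R : Type*} [CommRing R] {f : Z.V → R}
    (hf : Z.IsHarmonic f) (g : Z.V → R) :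
    ∑ d, f (Z.head d) * g (Z.tail d) = ∑ d, f (Z.head d) * g (Z.head d) := by
  rw [← sum_fiberwise univ Z.tail, sum_head_eq_sum_degree_mul Z fun w => f w * g w]
  refine sum_congr rfl fun w _ => ?_
  rw [sum_congr rfl fun d hd => by rw [(mem_filter.mp hd).2], ← sum_mul, hf w, mul_assoc]

theorem IsHarmonic.sum_energy_eq_zero {R : Type*} [CommRing R] {f : Z.V → R}
    (hf : Z.IsHarmonic f) (g : Z.V → R) :
    ∑ d, (f (Z.head d) - f (Z.tail d)) * (g (Z.head d) - g (Z.tail d)) = 0 := by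
  have hexpand : ∀ d, (f (Z.head d) - f (Z.tail d)) * (g (Z.head d) - g (Z.tail d))
      = (f (Z.head d) * g (Z.head d) - f (Z.head d) * g (Z.tail d))
        + (f (Z.tail d) * g (Z.tail d) - f (Z.tail d) * g (Z.head d)) := fun d => by ring
  simp only [hexpand, sum_add_distrib, sum_sub_distrib, hf.sum_head_mul_tail,
    Z.sum_tail_head_comm fun a b => f a * g a, Z.sum_tail_head_comm fun a b => f a * g b]
  ring

theorem IsHarmonic.head_eq_tail {f : Z.V → ℂ} (hf : Z.IsHarmonic f) (d : Z.D) :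
    f (Z.head d) = f (Z.tail d) := by
  have henergy : ∑ d, Complex.normSq (f (Z.head d) - f (Z.tail d)) = 0 := by
    have := hf.sum_energy_eq_zero (starRingEnd ℂ ∘ f)
    simp only [Function.comp_apply, ← map_sub, Complex.mul_conj] at this
    exact_mod_cast this
  rw [← sub_eq_zero, ← Complex.normSq_eq_zero]
  exact (sum_eq_zero_iff_of_nonneg fun d _ => Complex.normSq_nonneg _).mp henergy d (mem_univ d)

theorem IsHarmonic.eq_of_connected {f : Z.V → ℂ} (hf : Z.IsHarmonic f) (hZ : Z.Connected)
    (a b : Z.V) : f a = f b := by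
  induction hZ.2 a b with
  | refl => rfl
  | tail _ hadj ih =>
    obtain ⟨d, rfl, rfl⟩ := hadj
    exact ih.trans (hf.head_eq_tail d).symm

end Multigraph

theorem CoveringMap.degree_vmap {Y X : Multigraph} (F : CoveringMap Y X) (w : Y.V) :
    Y.degree w = X.degree (F.vmap w) := by
  rw [Multigraph.degree, Multigraph.degree, ← Fintype.card_subtype, ← Fintype.card_subtype]
  exact Fintype.card_congr (Set.BijOn.equiv _ (F.star_bij w))

namespace GaloisCover

variable {Y X : Multigraph} {G : Type}

section Group

variable [Group G] (C : GaloisCover Y X G)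

theorem actV_mul (σ τ : G) (w : Y.V) : C.actV (σ * τ) w = C.actV σ (C.actV τ w) := by
  rw [map_mul, Equiv.Perm.mul_apply]

theorem tail_actD (σ : G) (d : Y.D) : Y.tail (C.actD σ d) = C.actV σ (Y.tail d) := by
  rw [Multigraph.tail, C.act_inv, C.act_head, Multigraph.tail]

theorem sum_star_actV {R : Type*} [CommRing R] (F : Y.V → R) (σ : G) (w : Y.V) :
    ∑ d ∈ univ.filter (fun d => Y.tail d = C.actV σ w), F (Y.head d)
      = ∑ d ∈ univ.filter (fun d => Y.tail d = w), F (C.actV σ (Y.head d)) := by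
  refine (sum_nbij (C.actD σ) (fun d hd => ?_) (C.actD σ).injective.injOn
    (fun d hd => ?_) fun d _ => by rw [C.act_head]).symm
  · simp only [mem_filter, mem_univ, true_and] at hd ⊢
    rw [tail_actD, hd]
  · refine ⟨C.actD σ⁻¹ d, ?_, ?_⟩
    · simp only [coe_filter, mem_univ, true_and, Set.mem_ofPred_eq] at hd ⊢
      rw [tail_actD, hd, ← actV_mul, inv_mul_cancel, map_one, Equiv.Perm.one_apply]
    · rw [← Equiv.Perm.mul_apply, ← map_mul, mul_inv_cancel, map_one, Equiv.Perm.one_apply]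

variable (s : X.V → Y.V) (hs : ∀ v, C.vmap (s v) = v)
include hs

theorem bijective_actV_section :
    Function.Bijective fun p : G × X.V => C.actV p.1 (s p.2) := by
  refine ⟨fun ⟨σ, v⟩ ⟨τ, v'⟩ h => ?_, fun w => ?_⟩
  · dsimp only at h
    have hv : v = v' := by simpa only [C.vmap_act, hs] using congrArg C.vmap h
    subst hv
    have hfix : C.actV (τ⁻¹ * σ) (s v) = s v := by
      rw [actV_mul, h, ← actV_mul, inv_mul_cancel, map_one, Equiv.Perm.one_apply]
    rw [inv_mul_eq_one.mp (C.act_free _ _ hfix)]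
  · obtain ⟨σ, hσ⟩ := C.fiber_trans (s (C.vmap w)) w (by rw [hs])
    exact ⟨(σ, C.vmap w), hσ⟩

noncomputable def sectionEquiv : G × X.V ≃ Y.V :=
  Equiv.ofBijective _ (C.bijective_actV_section s hs)

theorem sectionEquiv_apply (p : G × X.V) : C.sectionEquiv s hs p = C.actV p.1 (s p.2) := rfl

noncomputable def charLift {R : Type*} [CommRing R] (χ : G →* R) (x : X.V → R) (w : Y.V) : R :=
  χ (C.sectionEquiv s hs |>.symm w).1 * x (C.sectionEquiv s hs |>.symm w).2

variable {R : Type*} [CommRing R] (χ : G →* R) (x : X.V → R)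

theorem charLift_actV_section (σ : G) (v : X.V) :
    C.charLift s hs χ x (C.actV σ (s v)) = χ σ * x v := by
  rw [charLift, ← sectionEquiv_apply C s hs (σ, v), Equiv.symm_apply_apply]

theorem charLift_actV (σ : G) (w : Y.V) :
    C.charLift s hs χ x (C.actV σ w) = χ σ * C.charLift s hs χ x w := by
  obtain ⟨⟨τ, v⟩, rfl⟩ := (C.sectionEquiv s hs).surjective w
  rw [sectionEquiv_apply, ← actV_mul, charLift_actV_section, charLift_actV_section, map_mul,
    mul_assoc]

theorem eq_zero_of_charLift_const [IsDomain R] (hχ : χ ≠ 1)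
    (hconst : ∀ a b, C.charLift s hs χ x a = C.charLift s hs χ x b) : x = 0 := by
  obtain ⟨σ, hσ⟩ : ∃ σ, χ σ ≠ 1 := by
    by_contra! h
    exact hχ (MonoidHom.ext h)
  funext v
  have hfix := hconst (C.actV σ (s v)) (C.actV 1 (s v))
  rw [charLift_actV_section, charLift_actV_section, map_one, one_mul] at hfix
  have hmul : (χ σ - 1) * x v = 0 := by rw [sub_mul, hfix, one_mul, sub_self]
  exact (mul_eq_zero.mp hmul).resolve_left (sub_ne_zero.mpr hσ)

end Group

section CommGroup

variable [CommGroup G] [Fintype G] (C : GaloisCover Y X G) (s : X.V → Y.V)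
  (hs : ∀ v, C.vmap (s v) = v) (χ : G →* ℂ)
include hs

open Matrix

theorem sum_star_section_charLift (x : X.V → ℂ) (v : X.V) :
    ∑ d ∈ univ.filter (fun d => Y.tail d = s v), C.charLift s hs χ x (Y.head d)
      = (C.Achi s χ *ᵥ x) v := by
  rw [Y.sum_star_eq_sum_numDarts, ← (C.sectionEquiv s hs).sum_comp, Fintype.sum_prod_type,
    sum_comm]
  simp only [sectionEquiv_apply, charLift_actV_section, Matrix.mulVec, dotProduct, Achi, Asigma,
    Matrix.sum_apply, Matrix.smul_apply, Matrix.map_apply, Matrix.of_apply, smul_eq_mul, sum_mul]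
  refine sum_congr rfl fun v' _ => sum_congr rfl fun σ _ => ?_
  push_cast
  ring

theorem isHarmonic_charLift {x : X.V → ℂ}
    (hx : (X.degMatrix.map (fun a : ℤ => (a : ℂ)) - C.Achi s χ) *ᵥ x = 0) :
    Y.IsHarmonic (C.charLift s hs χ x) := by
  have hAx : ∀ v, (C.Achi s χ *ᵥ x) v = X.degree v * x v := fun v => by
    have hv := congrFun hx v
    rw [Matrix.sub_mulVec, Pi.sub_apply, Pi.zero_apply, sub_eq_zero] at hv
    rw [← hv, Multigraph.degMatrix, Matrix.diagonal_map Int.cast_zero, Matrix.mulVec_diagonal]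
    rfl
  intro w
  obtain ⟨⟨σ, v⟩, rfl⟩ := (C.sectionEquiv s hs).surjective w
  rw [sectionEquiv_apply, C.sum_star_actV, charLift_actV_section, C.degree_vmap, C.vmap_act, hs]
  simp only [charLift_actV]
  rw [← mul_sum, sum_star_section_charLift, hAx]
  ring

theorem det_degMatrix_sub_Achi_ne_zero (hY : Y.Connected) (hχ : χ ≠ 1) :
    (X.degMatrix.map (fun a : ℤ => (a : ℂ)) - C.Achi s χ).det ≠ 0 := by
  intro hdet
  obtain ⟨x, hx0, hx⟩ := Matrix.exists_mulVec_eq_zero_iff.mpr hdet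
  exact hx0 <| C.eq_zero_of_charLift_const s hs χ x hχ <|
    (C.isHarmonic_charLift s hs χ hx).eq_of_connected hY

end CommGroup

end GaloisCover

theorem L_function_order_of_vanishing_general (X Y : Multigraph)
    (hYconn : Y.Connected)
    {G : Type} [CommGroup G] [Fintype G] (C : GaloisCover Y X G)
    (s : X.V → Y.V) (hs : ∀ v, C.vmap (s v) = v)
    (χ : G →* ℂ) (hχ : χ ≠ 1) :
    (C.LInv s χ).rootMultiplicity 1 = X.r - 1 := by
  refine Polynomial.rootMultiplicity_one_sub_X_sq_pow_mul two_ne_zero _ ?_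
  rw [Matrix.eval_one_det_one_sub_X_smul_add_X_sq_smul]
  exact C.det_degMatrix_sub_Achi_ne_zero s hs χ hYconn hχ

/-- For an abelian cover `Y/X` of multigraphs with
automorphism group `G` and any non-trivial character `χ` of `G`, the order of
vanishing of `L_{Y/X}(u,χ)⁻¹` at `u = 1` equals `r_X - 1`. -/
theorem L_function_order_of_vanishing (X Y : Multigraph)
    (hXconn : X.Connected) (hXdeg : X.NoDegreeOne)
    (hYconn : Y.Connected) (hYdeg : Y.NoDegreeOne)
    {G : Type} [CommGroup G] [Fintype G] (C : GaloisCover Y X G)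
    (s : X.V → Y.V) (hs : ∀ v, C.vmap (s v) = v)
    (χ : G →* ℂ) (hχ : χ ≠ 1) :
    (C.LInv s χ).rootMultiplicity 1 = X.r - 1 :=
  L_function_order_of_vanishing_general X Y hYconn C s hs χ hχ
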